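/- Let S be a slice of an LBFS of a graph G with maximal subslices x, S_1, ..., S_k, where N(x) ∩ S = S_1, and let C_1, ..., C_ℓ be the co-components of G[S_1]. Define C = {x} ∪ S_2 ∪ ... ∪ S_k together with all C_i that are NOT universal to it (iteratively absorbing such C_i). Then the co-components of G[S] are exactly the C_i that are universal to the final set C, together with C itself. -/

import Mathlib

/-- The LBFS label of vertex `v` just before step `t`: for each earlier step `i < t`
(in increasing order of `i`) at which a neighbour of `v` was explored, the value `n - i`
is appended. -/
def lbfsLabel {V : Type*} (G : SimpleGraph V) [DecidableRel G.Adj] (σ : ℕ → V)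
    (n t : ℕ) (v : V) : List ℕ :=
  ((List.range t).filter (fun i => decide (G.Adj (σ i) v))).map (fun i => n - i)

/-- `σ` (restricted to `[0,n)`) is a Lexicographic Breadth-First Search ordering of `G`:
it enumerates all vertices, and at each step the chosen vertex has lexicographically
largest label among the unexplored vertices. -/
def IsLBFS {V : Type*} (G : SimpleGraph V) [DecidableRel G.Adj] (n : ℕ) (σ : ℕ → V) : Prop :=
  Set.BijOn σ (Set.Iio n) Set.univ ∧
    ∀ t < n, ∀ v : V, (∀ i < t, σ i ≠ v) →
      ¬ List.Lex (· < ·) (lbfsLabel G σ n t (σ t)) (lbfsLabel G σ n t v)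

/-- The slice defined at step `t`: the unexplored vertices sharing the (lexicographically
largest) label of the chosen vertex `σ t` just before step `t`. -/
def sliceAt {V : Type*} (G : SimpleGraph V) [DecidableRel G.Adj] (σ : ℕ → V) (n t : ℕ) :
    Set V :=
  {v | (∀ i < t, σ i ≠ v) ∧ lbfsLabel G σ n t v = lbfsLabel G σ n t (σ t)}

/-- `S` is a slice of the LBFS. -/
def IsSlice {V : Type*} (G : SimpleGraph V) [DecidableRel G.Adj] (σ : ℕ → V) (n : ℕ)
    (S : Set V) : Prop :=
  ∃ t < n, S = sliceAt G σ n t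

/-- The slice defined at step `u` is a maximal (proper) subslice of the slice at step `t`. -/
def IsMaxSubsliceAt {V : Type*} (G : SimpleGraph V) [DecidableRel G.Adj] (σ : ℕ → V)
    (n t u : ℕ) : Prop :=
  u < n ∧ sliceAt G σ n u ⊂ sliceAt G σ n t ∧
    ∀ w < n, ¬(sliceAt G σ n u ⊂ sliceAt G σ n w ∧ sliceAt G σ n w ⊂ sliceAt G σ n t)

/-- `u 1, …, u k` are the steps defining the maximal subslices `S_1, …, S_k` of the slice
at step `t`, listed in the order the LBFS defines them (the initial vertex `σ t`, as a
singleton, being by convention the zeroth maximal subslice). -/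
def MaxSubsliceEnum {V : Type*} (G : SimpleGraph V) [DecidableRel G.Adj] (σ : ℕ → V)
    (n t k : ℕ) (u : ℕ → ℕ) : Prop :=
  (∀ i, 1 ≤ i → i ≤ k → IsMaxSubsliceAt G σ n t (u i)) ∧
  (∀ i j, 1 ≤ i → i < j → j ≤ k → u i < u j) ∧
  (∀ i, 1 ≤ i → i ≤ k → t < u i) ∧
  (∀ w, w < n → IsMaxSubsliceAt G σ n t w →
    ∃ i, 1 ≤ i ∧ i ≤ k ∧ sliceAt G σ n w = sliceAt G σ n (u i))

/-- The edge `ab` is active for the slice at step `t`: both endpoints lie in that slice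
but in different maximal subslices of it (i.e. no maximal subslice contains both). -/
def activeFor {V : Type*} (G : SimpleGraph V) [DecidableRel G.Adj] (σ : ℕ → V)
    (n t : ℕ) (a b : V) : Prop :=
  G.Adj a b ∧ a ∈ sliceAt G σ n t ∧ b ∈ sliceAt G σ n t ∧
    ∀ w, IsMaxSubsliceAt G σ n t w → ¬(a ∈ sliceAt G σ n w ∧ b ∈ sliceAt G σ n w)
/-- `d` is a transitive orientation of the subgraph of `G` induced on `S`:
each edge of `G[S]` gets exactly one direction, and directions compose transitively. -/
def IsTransOrientationOn {V : Type*} (G : SimpleGraph V) (S : Set V)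
    (d : V → V → Prop) : Prop :=
  (∀ a b, d a b → G.Adj a b ∧ a ∈ S ∧ b ∈ S) ∧
  (∀ a b, G.Adj a b → a ∈ S → b ∈ S → d a b ∨ d b a) ∧
  (∀ a b, d a b → ¬ d b a) ∧
  (∀ a b c, d a b → d b c → d a c)

/-- `M` is a module of `G`: every vertex outside `M` is adjacent to all of `M` or to
none of `M`. -/
def IsModule {V : Type*} (G : SimpleGraph V) (M : Set V) : Prop :=
  ∀ v ∉ M, (∀ m ∈ M, G.Adj v m) ∨ (∀ m ∈ M, ¬ G.Adj v m)

/-- `G` is prime: it has no non-trivial module. -/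
def IsPrimeGraph {V : Type*} (G : SimpleGraph V) : Prop :=
  ∀ M : Set V, IsModule G M → M.Subsingleton ∨ M = Set.univ

/-- `C` is a connected component of the subgraph of `G` induced on `S`. -/
def IsComponentOn {V : Type*} (G : SimpleGraph V) (S C : Set V) : Prop :=
  C ⊆ S ∧ C.Nonempty ∧
  (∀ a ∈ C, ∀ b ∈ C, Relation.ReflTransGen (fun p q => p ∈ S ∧ q ∈ S ∧ G.Adj p q) a b) ∧
  (∀ a ∈ C, ∀ b ∈ S, G.Adj a b → b ∈ C)

/-- `C` is a co-component of `G[S]`: a connected component of the complement of the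
subgraph of `G` induced on `S`. -/
def IsCoComponentOn {V : Type*} (G : SimpleGraph V) (S C : Set V) : Prop :=
  C ⊆ S ∧ C.Nonempty ∧
  (∀ a ∈ C, ∀ b ∈ C,
    Relation.ReflTransGen (fun p q => p ∈ S ∧ q ∈ S ∧ p ≠ q ∧ ¬ G.Adj p q) a b) ∧
  (∀ a ∈ C, ∀ b ∈ S, a ≠ b → ¬ G.Adj a b → b ∈ C)

/-!
Write `S₁ = N(x) ∩ S`. The LBFS enters only through `S \ S₁ = {x} ∪ S₂ ∪ ⋯ ∪ Sₖ`, which holds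
because every vertex of `S` other than `x` lies in exactly one maximal subslice. From then on the
argument works in any graph where `S` is split into a co-connected set `C₀` (here co-connected
because `x` has no neighbour in it) and a set `A` with co-components `Cᵢ`. Absorbing a `Cᵢ` that
has a non-neighbour in the current set keeps that set co-connected. A `Cᵢ` that is skipped is
universal to the current set and, being a different co-component of `G[A]`, to every `Cⱼ`
absorbed later, so it is universal to the final set `C`. Hence every vertex of `S` outside `C`
is universal to `C`, which makes `C` a co-component of `G[S]`, and the skipped `Cᵢ` remain
co-components of `G[S]`.
-/

open Relation

section CoComponents

variable {V : Type*}

def coAdjOn (G : SimpleGraph V) (S : Set V) (p q : V) : Prop :=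
  p ∈ S ∧ q ∈ S ∧ p ≠ q ∧ ¬ G.Adj p q

def IsCoConnectedOn (G : SimpleGraph V) (S C : Set V) : Prop :=
  ∀ a ∈ C, ∀ b ∈ C, ReflTransGen (coAdjOn G S) a b

def IsUniversalTo (G : SimpleGraph V) (A B : Set V) : Prop :=
  ∀ a ∈ A, ∀ b ∈ B, G.Adj a b

structure IsCoComponentEnum (G : SimpleGraph V) (A : Set V) (ℓ : ℕ) (Cc : ℕ → Set V) :
    Prop where
  isCoComponentOn : ∀ i, 1 ≤ i → i ≤ ℓ → IsCoComponentOn G A (Cc i)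
  exists_eq : ∀ D, IsCoComponentOn G A D → ∃ i, 1 ≤ i ∧ i ≤ ℓ ∧ D = Cc i
  injective : ∀ i j, 1 ≤ i → i < j → j ≤ ℓ → Cc i ≠ Cc j

open Classical in
/-- `Cseq i` is the current set `C` after the `i`-th step of the absorption algorithm. -/
def IsAbsorptionSeq (G : SimpleGraph V) (ℓ : ℕ) (Cc Cseq : ℕ → Set V) : Prop :=
  ∀ i, 1 ≤ i → i ≤ ℓ →
    Cseq i = if IsUniversalTo G (Cc i) (Cseq (i - 1)) then Cseq (i - 1)
             else Cseq (i - 1) ∪ Cc i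

variable {G : SimpleGraph V} {S A C D : Set V}

instance : Std.Symm (coAdjOn G S) :=
  ⟨fun _ _ ⟨hp, hq, hne, hadj⟩ => ⟨hq, hp, hne.symm, fun h => hadj h.symm⟩⟩

theorem reflTransGen_coAdjOn_of_not_adj {a b : V} (ha : a ∈ S) (hb : b ∈ S)
    (hab : ¬ G.Adj a b) : ReflTransGen (coAdjOn G S) a b := by
  by_cases h : a = b
  · exact h ▸ ReflTransGen.refl
  · exact ReflTransGen.single ⟨ha, hb, h, hab⟩

theorem isCoConnectedOn_of_forall_reflTransGen {x : V}
    (h : ∀ v ∈ C, ReflTransGen (coAdjOn G S) x v) : IsCoConnectedOn G S C :=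
  fun a ha b hb => (Std.Symm.symm _ _ (h a ha)).trans (h b hb)

theorem isCoConnectedOn_of_forall_not_adj {x : V} (hCS : C ⊆ S) (hx : x ∈ C)
    (hxC : ∀ v ∈ C, ¬ G.Adj x v) : IsCoConnectedOn G S C :=
  isCoConnectedOn_of_forall_reflTransGen fun v hv =>
    reflTransGen_coAdjOn_of_not_adj (hCS hx) (hCS hv) (hxC v hv)

theorem IsCoConnectedOn.mono {S' : Set V} (hC : IsCoConnectedOn G S C) (hS : S ⊆ S') :
    IsCoConnectedOn G S' C :=
  fun a ha b hb =>
    ReflTransGen.mono (fun _ _ ⟨hp, hq, h⟩ => ⟨hS hp, hS hq, h⟩) _ _ (hC a ha b hb)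

theorem IsCoConnectedOn.union {a b : V} (hC : IsCoConnectedOn G S C)
    (hD : IsCoConnectedOn G S D) (ha : a ∈ C) (hb : b ∈ D) (haS : a ∈ S) (hbS : b ∈ S)
    (hab : ¬ G.Adj a b) : IsCoConnectedOn G S (C ∪ D) :=
  isCoConnectedOn_of_forall_reflTransGen fun _ hv => hv.elim (hC a ha _)
    fun hvD => (reflTransGen_coAdjOn_of_not_adj haS hbS hab).trans (hD b hb _ hvD)

theorem isCoComponentOn_of_adj (hCS : C ⊆ S) (hne : C.Nonempty)
    (hconn : IsCoConnectedOn G S C) (hadj : ∀ a ∈ C, ∀ b ∈ S, b ∉ C → G.Adj a b) :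
    IsCoComponentOn G S C :=
  ⟨hCS, hne, hconn, fun a ha b hb _ hab => by_contra fun hbC => hab (hadj a ha b hb hbC)⟩

theorem exists_isCoComponentOn_mem {v : V} (hv : v ∈ S) :
    ∃ C, IsCoComponentOn G S C ∧ v ∈ C := by
  set C := {w | ReflTransGen (coAdjOn G S) v w}
  have hCS : C ⊆ S := fun w hw => by
    rcases ReflTransGen.cases_tail hw with rfl | ⟨_, _, hw⟩
    exacts [hv, hw.2.1]
  refine ⟨C, ⟨hCS, ⟨v, ReflTransGen.refl⟩, isCoConnectedOn_of_forall_reflTransGen fun _ h => h,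
    fun a ha b hb hab hnadj => ReflTransGen.tail ha ⟨hCS ha, hb, hab, hnadj⟩⟩,
    ReflTransGen.refl⟩

namespace IsCoComponentOn

theorem isCoConnectedOn (hC : IsCoComponentOn G S C) : IsCoConnectedOn G S C :=
  hC.2.2.1

theorem mem_of_reflTransGen (hC : IsCoComponentOn G S C) {a b : V} (ha : a ∈ C)
    (hab : ReflTransGen (coAdjOn G S) a b) : b ∈ C := by
  induction hab with
  | refl => exact ha
  | tail _ hcd ih => exact hC.2.2.2 _ ih _ hcd.2.1 hcd.2.2.1 hcd.2.2.2

theorem eq_of_mem (hC : IsCoComponentOn G S C) (hD : IsCoComponentOn G S D) {v : V}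
    (hvC : v ∈ C) (hvD : v ∈ D) : C = D :=
  Set.ext fun _ => ⟨fun hw => hD.mem_of_reflTransGen hvD (hC.isCoConnectedOn v hvC _ hw),
    fun hw => hC.mem_of_reflTransGen hvC (hD.isCoConnectedOn v hvD _ hw)⟩

theorem adj_of_notMem (hC : IsCoComponentOn G S C) {a b : V} (ha : a ∈ C) (hb : b ∈ S)
    (hbC : b ∉ C) : G.Adj a b :=
  by_contra fun hab => hbC (hC.2.2.2 a ha b hb (ne_of_mem_of_not_mem ha hbC) hab)

theorem isUniversalTo (hC : IsCoComponentOn G S C) (hD : IsCoComponentOn G S D)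
    (hCD : C ≠ D) : IsUniversalTo G C D :=
  fun _ ha _ hb => hC.adj_of_notMem ha (hD.1 hb) fun hbC => hCD (hC.eq_of_mem hD hbC hb)

/-- A co-path of `G[S]` starting in the co-component `D` never leaves `D`. -/
theorem reflTransGen_coAdjOn_of_subset (hD : IsCoComponentOn G S D) (hDA : D ⊆ A) {a b : V}
    (ha : a ∈ D) (hab : ReflTransGen (coAdjOn G S) a b) : ReflTransGen (coAdjOn G A) a b := by
  induction hab with
  | refl => exact ReflTransGen.refl
  | @tail c d hac hcd ih =>
    have hc := hD.mem_of_reflTransGen ha hac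
    have hd := hD.mem_of_reflTransGen ha (hac.tail hcd)
    exact ih.tail ⟨hDA hc, hDA hd, hcd.2.2⟩

theorem of_subset (hD : IsCoComponentOn G S D) (hDA : D ⊆ A) (hAS : A ⊆ S) :
    IsCoComponentOn G A D :=
  ⟨hDA, hD.2.1, fun a ha b hb => hD.reflTransGen_coAdjOn_of_subset hDA ha (hD.2.2.1 a ha b hb),
    fun a ha b hb => hD.2.2.2 a ha b (hAS hb)⟩

end IsCoComponentOn

theorem IsCoComponentEnum.isUniversalTo {ℓ : ℕ} {Cc : ℕ → Set V}
    (hCc : IsCoComponentEnum G A ℓ Cc) {i j : ℕ} (hi1 : 1 ≤ i) (hiℓ : i ≤ ℓ) (hj1 : 1 ≤ j)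
    (hjℓ : j ≤ ℓ) (hij : i ≠ j) : IsUniversalTo G (Cc i) (Cc j) := by
  refine (hCc.isCoComponentOn i hi1 hiℓ).isUniversalTo (hCc.isCoComponentOn j hj1 hjℓ) ?_
  rcases lt_or_gt_of_ne hij with h | h
  exacts [hCc.injective i j hi1 h hjℓ, (hCc.injective j i hj1 h hiℓ).symm]

end CoComponents

section Absorption

variable {V : Type*} {G : SimpleGraph V} {S A : Set V} {ℓ : ℕ} {Cc Cseq : ℕ → Set V}

theorem IsAbsorptionSeq.mem_iff (hseq : IsAbsorptionSeq G ℓ Cc Cseq) {m : ℕ} (hm : m ≤ ℓ)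
    {v : V} : v ∈ Cseq m ↔ v ∈ Cseq 0 ∨
      ∃ j, 1 ≤ j ∧ j ≤ m ∧ ¬ IsUniversalTo G (Cc j) (Cseq (j - 1)) ∧ v ∈ Cc j := by
  induction m with
  | zero => simp
  | succ m ih =>
    have hstep := hseq (m + 1) (by omega) hm
    rw [Nat.add_sub_cancel] at hstep
    rw [hstep, apply_ite (v ∈ ·), Set.mem_union, ih (by omega)]
    split_ifs <;> grind

theorem IsAbsorptionSeq.zero_subset (hseq : IsAbsorptionSeq G ℓ Cc Cseq) {m : ℕ} (hm : m ≤ ℓ) :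
    Cseq 0 ⊆ Cseq m :=
  fun _ hv => (hseq.mem_iff hm).2 (Or.inl hv)

theorem IsAbsorptionSeq.subset (hseq : IsAbsorptionSeq G ℓ Cc Cseq) (h0S : Cseq 0 ⊆ S)
    (hCcS : ∀ i, 1 ≤ i → i ≤ ℓ → Cc i ⊆ S) {m : ℕ} (hm : m ≤ ℓ) : Cseq m ⊆ S := by
  intro v hv
  rcases (hseq.mem_iff hm).1 hv with hv0 | ⟨j, hj1, hjm, -, hvj⟩
  exacts [h0S hv0, hCcS j hj1 (hjm.trans hm) hvj]

theorem IsAbsorptionSeq.isCoConnectedOn (hseq : IsAbsorptionSeq G ℓ Cc Cseq)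
    (h0S : Cseq 0 ⊆ S) (hCcS : ∀ i, 1 ≤ i → i ≤ ℓ → Cc i ⊆ S)
    (h0 : IsCoConnectedOn G S (Cseq 0))
    (hCcconn : ∀ i, 1 ≤ i → i ≤ ℓ → IsCoConnectedOn G S (Cc i))
    {m : ℕ} (hm : m ≤ ℓ) : IsCoConnectedOn G S (Cseq m) := by
  induction m with
  | zero => exact h0
  | succ m ih =>
    have hstep := hseq (m + 1) (by omega) hm
    rw [Nat.add_sub_cancel] at hstep
    rw [hstep]
    split_ifs with huniv
    · exact ih (by omega)
    · obtain ⟨a, ha, b, hb, hab⟩ : ∃ a ∈ Cc (m + 1), ∃ b ∈ Cseq m, ¬ G.Adj a b := by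
        simpa [IsUniversalTo] using huniv
      exact (ih (by omega)).union (hCcconn (m + 1) (by omega) hm) hb ha
        (hseq.subset h0S hCcS (by omega) hb) (hCcS (m + 1) (by omega) hm ha)
        fun h => hab h.symm

theorem IsAbsorptionSeq.isUniversalTo_last (hseq : IsAbsorptionSeq G ℓ Cc Cseq)
    (hCc : IsCoComponentEnum G A ℓ Cc) {i : ℕ} (hi1 : 1 ≤ i) (hiℓ : i ≤ ℓ)
    (huniv : IsUniversalTo G (Cc i) (Cseq (i - 1))) : IsUniversalTo G (Cc i) (Cseq ℓ) := by
  intro a ha b hb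
  rcases (hseq.mem_iff le_rfl).1 hb with hb0 | ⟨j, hj1, hjℓ, hj, hbj⟩
  · exact huniv a ha b (hseq.zero_subset (by omega) hb0)
  · have hij : i ≠ j := by
      rintro rfl
      exact hj huniv
    exact hCc.isUniversalTo hi1 hiℓ hj1 hjℓ hij a ha b hbj

theorem IsAbsorptionSeq.isCoComponentOn_last (hseq : IsAbsorptionSeq G ℓ Cc Cseq)
    (hCc : IsCoComponentEnum G A ℓ Cc) (hS : Cseq 0 ∪ A = S) (h0ne : (Cseq 0).Nonempty)
    (h0conn : IsCoConnectedOn G S (Cseq 0)) : IsCoComponentOn G S (Cseq ℓ) := by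
  have hAS : A ⊆ S := hS ▸ Set.subset_union_right
  have h0S : Cseq 0 ⊆ S := hS ▸ Set.subset_union_left
  have hCcS : ∀ i, 1 ≤ i → i ≤ ℓ → Cc i ⊆ S := fun i hi1 hiℓ =>
    (hCc.isCoComponentOn i hi1 hiℓ).1.trans hAS
  refine isCoComponentOn_of_adj (hseq.subset h0S hCcS le_rfl)
    (h0ne.mono (hseq.zero_subset le_rfl))
    (hseq.isCoConnectedOn h0S hCcS h0conn
      (fun i hi1 hiℓ => (hCc.isCoComponentOn i hi1 hiℓ).isCoConnectedOn.mono hAS) le_rfl) ?_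
  intro a ha b hb hbC
  have hbA : b ∈ A := by
    rw [← hS] at hb
    exact hb.resolve_left fun hb0 => hbC (hseq.zero_subset le_rfl hb0)
  obtain ⟨D, hD, hbD⟩ := exists_isCoComponentOn_mem hbA
  obtain ⟨j, hj1, hjℓ, rfl⟩ := hCc.exists_eq D hD
  have huniv : IsUniversalTo G (Cc j) (Cseq (j - 1)) := by
    by_contra h
    exact hbC ((hseq.mem_iff le_rfl).2 (Or.inr ⟨j, hj1, hjℓ, h, hbD⟩))
  exact (hseq.isUniversalTo_last hCc hj1 hjℓ huniv b hbD a ha).symm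

theorem IsAbsorptionSeq.isCoComponentOn_of_isUniversalTo (hseq : IsAbsorptionSeq G ℓ Cc Cseq)
    (hCc : IsCoComponentEnum G A ℓ Cc) (hS : Cseq 0 ∪ A = S) {i : ℕ} (hi1 : 1 ≤ i)
    (hiℓ : i ≤ ℓ) (huniv : IsUniversalTo G (Cc i) (Cseq ℓ)) : IsCoComponentOn G S (Cc i) := by
  have hAS : A ⊆ S := hS ▸ Set.subset_union_right
  have hCi := hCc.isCoComponentOn i hi1 hiℓ
  refine isCoComponentOn_of_adj (hCi.1.trans hAS) hCi.2.1 (hCi.isCoConnectedOn.mono hAS) ?_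
  intro a ha b hb hbC
  rw [← hS] at hb
  rcases hb with hb0 | hbA
  exacts [huniv a ha b (hseq.zero_subset le_rfl hb0), hCi.adj_of_notMem ha hbA hbC]

theorem IsAbsorptionSeq.eq_last_or_isUniversalTo (hseq : IsAbsorptionSeq G ℓ Cc Cseq)
    (hCc : IsCoComponentEnum G A ℓ Cc) (hS : Cseq 0 ∪ A = S)
    (hlast : IsCoComponentOn G S (Cseq ℓ)) {D : Set V} (hD : IsCoComponentOn G S D) :
    D = Cseq ℓ ∨ ∃ i, 1 ≤ i ∧ i ≤ ℓ ∧ IsUniversalTo G (Cc i) (Cseq ℓ) ∧ D = Cc i := by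
  by_cases hmeet : ∃ v ∈ D, v ∈ Cseq ℓ
  · obtain ⟨v, hvD, hv⟩ := hmeet
    exact Or.inl (hD.eq_of_mem hlast hvD hv)
  push Not at hmeet
  have hDA : D ⊆ A := by
    intro v hv
    have hvS := hD.1 hv
    rw [← hS] at hvS
    exact hvS.resolve_left fun hv0 => hmeet v hv (hseq.zero_subset le_rfl hv0)
  obtain ⟨i, hi1, hiℓ, rfl⟩ := hCc.exists_eq D (hD.of_subset hDA (hS ▸ Set.subset_union_right))
  exact Or.inr ⟨i, hi1, hiℓ, fun a ha b hb => hD.adj_of_notMem ha (hlast.1 hb) (hmeet b · hb),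
    rfl⟩

theorem IsAbsorptionSeq.isCoComponentOn_iff (hseq : IsAbsorptionSeq G ℓ Cc Cseq)
    (hCc : IsCoComponentEnum G A ℓ Cc) (hS : Cseq 0 ∪ A = S) (h0ne : (Cseq 0).Nonempty)
    (h0conn : IsCoConnectedOn G S (Cseq 0)) (D : Set V) :
    IsCoComponentOn G S D ↔
      D = Cseq ℓ ∨ ∃ i, 1 ≤ i ∧ i ≤ ℓ ∧ IsUniversalTo G (Cc i) (Cseq ℓ) ∧ D = Cc i := by
  have hlast := hseq.isCoComponentOn_last hCc hS h0ne h0conn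
  refine ⟨hseq.eq_last_or_isUniversalTo hCc hS hlast, ?_⟩
  rintro (rfl | ⟨i, hi1, hiℓ, huniv, rfl⟩)
  exacts [hlast, hseq.isCoComponentOn_of_isUniversalTo hCc hS hi1 hiℓ huniv]

end Absorption

section LBFS

variable {V : Type*} {G : SimpleGraph V} [DecidableRel G.Adj] {σ : ℕ → V} {n : ℕ}

theorem sub_mem_lbfsLabel_iff {s i : ℕ} (hs : s ≤ n) (hi : i < s) {v : V} :
    n - i ∈ lbfsLabel G σ n s v ↔ G.Adj (σ i) v := by
  simp only [lbfsLabel, List.mem_map, List.mem_filter, List.mem_range, decide_eq_true_eq]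
  constructor
  · rintro ⟨j, ⟨hj, hadj⟩, hji⟩
    obtain rfl : j = i := by omega
    exact hadj
  · exact fun hadj => ⟨i, ⟨hi, hadj⟩, rfl⟩

theorem lbfsLabel_eq_iff {s : ℕ} (hs : s ≤ n) {v w : V} :
    lbfsLabel G σ n s v = lbfsLabel G σ n s w ↔ ∀ i < s, (G.Adj (σ i) v ↔ G.Adj (σ i) w) := by
  refine ⟨fun h i hi => by rw [← sub_mem_lbfsLabel_iff hs hi, ← sub_mem_lbfsLabel_iff hs hi, h],
    fun h => ?_⟩
  unfold lbfsLabel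
  congr 1
  refine List.filter_congr fun i hi => ?_
  rw [List.mem_range] at hi
  simp [h i hi]

theorem sliceAt_subset_sliceAt {a b : ℕ} (hab : a ≤ b) (hb : b ≤ n) {v : V}
    (hva : v ∈ sliceAt G σ n a) (hvb : v ∈ sliceAt G σ n b) :
    sliceAt G σ n b ⊆ sliceAt G σ n a := by
  intro w hw
  have hwv := (lbfsLabel_eq_iff hb).1 (hw.2.trans hvb.2.symm)
  refine ⟨fun i hi => hw.1 i (hi.trans_le hab), ?_⟩
  rw [← hva.2]
  exact (lbfsLabel_eq_iff (hab.trans hb)).2 fun i hi => hwv i (hi.trans_le hab)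

theorem self_mem_sliceAt (hinj : Set.InjOn σ (Set.Iio n)) {s : ℕ} (hs : s < n) :
    σ s ∈ sliceAt G σ n s :=
  ⟨fun _ hi h => hi.ne (hinj (hi.trans hs) hs h), rfl⟩

theorem apply_notMem_sliceAt {s s' : ℕ} (h : s' < s) : σ s' ∉ sliceAt G σ n s :=
  fun hm => hm.1 s' h rfl

theorem sliceAt_ssubset_sliceAt (hinj : Set.InjOn σ (Set.Iio n)) {a b : ℕ} (hab : a < b)
    (hb : b < n) {v : V} (hva : v ∈ sliceAt G σ n a) (hvb : v ∈ sliceAt G σ n b) :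
    sliceAt G σ n b ⊂ sliceAt G σ n a :=
  (Set.ssubset_iff_of_subset (sliceAt_subset_sliceAt hab.le hb.le hva hvb)).2
    ⟨σ a, self_mem_sliceAt hinj (hab.trans hb), apply_notMem_sliceAt hab⟩

theorem IsMaxSubsliceAt.disjoint (hinj : Set.InjOn σ (Set.Iio n)) {t w₁ w₂ : ℕ}
    (h₁ : IsMaxSubsliceAt G σ n t w₁) (h₂ : IsMaxSubsliceAt G σ n t w₂) (hlt : w₁ < w₂) :
    Disjoint (sliceAt G σ n w₁) (sliceAt G σ n w₂) :=
  Set.disjoint_left.2 fun _ hv₁ hv₂ =>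
    h₂.2.2 w₁ h₁.1 ⟨sliceAt_ssubset_sliceAt hinj hlt h₂.1 hv₁ hv₂, h₁.2.1⟩

/-- The earliest step defining a proper subslice that contains `v` defines a maximal one. -/
theorem IsLBFS.exists_isMaxSubsliceAt_mem (hL : IsLBFS G n σ) {t : ℕ} (ht : t < n) {v : V}
    (hv : v ∈ sliceAt G σ n t) (hvx : v ≠ σ t) :
    ∃ w, IsMaxSubsliceAt G σ n t w ∧ v ∈ sliceAt G σ n w := by
  classical
  have hinj : Set.InjOn σ (Set.Iio n) := hL.1.2.1
  obtain ⟨s, hs, rfl⟩ := hL.1.2.2 (Set.mem_univ v)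
  have hts : t < s := by
    rcases lt_trichotomy s t with h | rfl | h
    exacts [absurd rfl (hv.1 s h), absurd rfl hvx, h]
  have hP : ∃ w, w < n ∧ σ s ∈ sliceAt G σ n w ∧ sliceAt G σ n w ⊂ sliceAt G σ n t :=
    ⟨s, hs, self_mem_sliceAt hinj hs,
      sliceAt_ssubset_sliceAt hinj hts hs hv (self_mem_sliceAt hinj hs)⟩
  obtain ⟨hwn, hsw, hwt⟩ := Nat.find_spec hP
  refine ⟨Nat.find hP, ⟨hwn, hwt, fun w' hw'n ⟨hww', hw't⟩ => ?_⟩, hsw⟩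
  have hsw' := hww'.subset hsw
  exact hww'.not_subset
    (sliceAt_subset_sliceAt (Nat.find_min' hP ⟨hw'n, hsw', hw't⟩) hw'n.le hsw hsw')

theorem IsLBFS.sliceAt_diff_first_maxSubslice (hL : IsLBFS G n σ) {t k : ℕ} (ht : t < n)
    {u : ℕ → ℕ} (hu : MaxSubsliceEnum G σ n t k u)
    (hNx : G.neighborSet (σ t) ∩ sliceAt G σ n t = sliceAt G σ n (u 1)) :
    sliceAt G σ n t \ sliceAt G σ n (u 1) = {σ t} ∪ ⋃ i ∈ Set.Icc 2 k, sliceAt G σ n (u i) := by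
  have hinj : Set.InjOn σ (Set.Iio n) := hL.1.2.1
  ext v
  simp only [Set.mem_sdiff, Set.mem_union, Set.mem_singleton_iff, Set.mem_iUnion, Set.mem_Icc,
    exists_prop]
  constructor
  · rintro ⟨hv, hv1⟩
    by_cases hvx : v = σ t
    · exact Or.inl hvx
    obtain ⟨w, hw, hvw⟩ := hL.exists_isMaxSubsliceAt_mem ht hv hvx
    obtain ⟨i, hi1, hik, heq⟩ := hu.2.2.2 w hw.1 hw
    rw [heq] at hvw
    have hi : i ≠ 1 := by
      rintro rfl
      exact hv1 hvw
    exact Or.inr ⟨i, ⟨by omega, hik⟩, hvw⟩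
  · rintro (rfl | ⟨i, ⟨hi2, hik⟩, hvi⟩)
    · refine ⟨self_mem_sliceAt hinj ht, fun hx => ?_⟩
      rw [← hNx] at hx
      exact G.irrefl hx.1
    · refine ⟨(hu.1 i (by omega) hik).2.1.subset hvi, fun hv1 => ?_⟩
      exact Set.disjoint_left.1 (IsMaxSubsliceAt.disjoint hinj (hu.1 1 le_rfl (by omega))
        (hu.1 i (by omega) hik) (hu.2.1 1 i le_rfl hi2 hik)) hv1 hvi

end LBFS

open Classical in
theorem cocomponents_of_slice_algorithm_general {V : Type*} (G : SimpleGraph V)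
    [DecidableRel G.Adj] (n : ℕ) (σ : ℕ → V) (hL : IsLBFS G n σ)
    (t : ℕ) (ht : t < n) (k : ℕ) (u : ℕ → ℕ) (hu : MaxSubsliceEnum G σ n t k u)
    (hNx : G.neighborSet (σ t) ∩ sliceAt G σ n t = sliceAt G σ n (u 1))
    (ℓc : ℕ) (Cc : ℕ → Set V)
    (hCc : ∀ i, 1 ≤ i → i ≤ ℓc → IsCoComponentOn G (sliceAt G σ n (u 1)) (Cc i))
    (hCcAll : ∀ D, IsCoComponentOn G (sliceAt G σ n (u 1)) D →
      ∃ i, 1 ≤ i ∧ i ≤ ℓc ∧ D = Cc i)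
    (hCcDistinct : ∀ i j, 1 ≤ i → i < j → j ≤ ℓc → Cc i ≠ Cc j)
    (Cseq : ℕ → Set V)
    (h0 : Cseq 0 = {σ t} ∪ ⋃ i ∈ Set.Icc 2 k, sliceAt G σ n (u i))
    (hstep : ∀ i, 1 ≤ i → i ≤ ℓc →
      Cseq i = if (∀ a ∈ Cc i, ∀ b ∈ Cseq (i - 1), G.Adj a b) then Cseq (i - 1)
               else Cseq (i - 1) ∪ Cc i) :
    ∀ D : Set V, IsCoComponentOn G (sliceAt G σ n t) D ↔
      (D = Cseq ℓc ∨
        ∃ i, 1 ≤ i ∧ i ≤ ℓc ∧ (∀ a ∈ Cc i, ∀ b ∈ Cseq ℓc, G.Adj a b) ∧ D = Cc i) := by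
  have hS1 : sliceAt G σ n (u 1) ⊆ sliceAt G σ n t := hNx ▸ Set.inter_subset_right
  have hC0 : Cseq 0 = sliceAt G σ n t \ sliceAt G σ n (u 1) :=
    h0.trans (hL.sliceAt_diff_first_maxSubslice ht hu hNx).symm
  have hx : σ t ∈ Cseq 0 := h0 ▸ Or.inl rfl
  have hC0conn : IsCoConnectedOn G (sliceAt G σ n t) (Cseq 0) := by
    refine isCoConnectedOn_of_forall_not_adj (hC0 ▸ Set.sdiff_subset) hx fun v hv hadj => ?_
    rw [hC0] at hv
    exact hv.2 (hNx ▸ ⟨hadj, hv.1⟩)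
  exact IsAbsorptionSeq.isCoComponentOn_iff (A := sliceAt G σ n (u 1)) hstep
    ⟨hCc, hCcAll, hCcDistinct⟩ (by rw [hC0, Set.sdiff_union_of_subset hS1]) ⟨σ t, hx⟩ hC0conn

open Classical in
/-- starting from `C = {x} ∪ S_2 ∪ ⋯ ∪ S_k` and iteratively absorbing
every co-component `C_i` of `G[S_1]` that is not universal to the current `C`, the
co-components of `G[S]` are exactly the `C_i` universal to the final `C`, together
with `C` itself. -/
theorem cocomponents_of_slice_algorithm {V : Type*} (G : SimpleGraph V)
    [DecidableRel G.Adj] (n : ℕ) (σ : ℕ → V) (hL : IsLBFS G n σ)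
    (t : ℕ) (ht : t < n) (k : ℕ) (u : ℕ → ℕ) (hu : MaxSubsliceEnum G σ n t k u)
    (hk : 1 ≤ k)
    (hNx : G.neighborSet (σ t) ∩ sliceAt G σ n t = sliceAt G σ n (u 1))
    (ℓc : ℕ) (Cc : ℕ → Set V)
    (hCc : ∀ i, 1 ≤ i → i ≤ ℓc → IsCoComponentOn G (sliceAt G σ n (u 1)) (Cc i))
    (hCcAll : ∀ D, IsCoComponentOn G (sliceAt G σ n (u 1)) D →
      ∃ i, 1 ≤ i ∧ i ≤ ℓc ∧ D = Cc i)
    (hCcDistinct : ∀ i j, 1 ≤ i → i < j → j ≤ ℓc → Cc i ≠ Cc j)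
    (Cseq : ℕ → Set V)
    (h0 : Cseq 0 = {σ t} ∪ ⋃ i ∈ Set.Icc 2 k, sliceAt G σ n (u i))
    (hstep : ∀ i, 1 ≤ i → i ≤ ℓc →
      Cseq i = if (∀ a ∈ Cc i, ∀ b ∈ Cseq (i - 1), G.Adj a b) then Cseq (i - 1)
               else Cseq (i - 1) ∪ Cc i) :
    ∀ D : Set V, IsCoComponentOn G (sliceAt G σ n t) D ↔
      (D = Cseq ℓc ∨
        ∃ i, 1 ≤ i ∧ i ≤ ℓc ∧ (∀ a ∈ Cc i, ∀ b ∈ Cseq ℓc, G.Adj a b) ∧ D = Cc i) :=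
  cocomponents_of_slice_algorithm_general G n σ hL t ht k u hu hNx ℓc Cc hCc hCcAll hCcDistinct Cseq
    h0 hstep
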